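/- Let x be an indeterminate commuting with itself and consider the identity, for natural numbers n,m: Σ_{k=0}^{min(n,m)} (−1)^k k! C(n,k) C(m,k) Σ_{j=0}^{min(n−k,m−k)} j! C(n−k,j) C(m−k,j) X_{n−k−j, m−k−j} = X_{n,m} for any doubly-indexed family X; i.e., the transformation T(X)_{n,m} = Σ_k k! C(n,k) C(m,k) X_{n−k,m−k} is inverted by S(X)_{n,m} = Σ_k (−1)^k k! C(n,k) C(m,k) X_{n−k,m−k}. -/

import Mathlib

/-!
On exponential generating functions `∑ X n m xⁿ yᵐ / (n! m!)`, the transform with parameter `a`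
below is multiplication by `exp (a x y)`; hence these transforms compose by adding parameters,
and `T = reorderingTransform 1`, `S = reorderingTransform (-1)` are mutually inverse. Directly:
regroup the double sum by `l = k + j` and apply the binomial theorem to `(a + b) ^ l`.
-/

open Finset Nat

theorem Nat.factorial_mul_factorial_mul_choose_mul_choose {n k l : ℕ} (hkl : k ≤ l) :
    k ! * (l - k)! * (n.choose k * (n - k).choose (l - k)) = l ! * n.choose l := by
  rw [← Nat.choose_mul hkl, ← Nat.choose_mul_factorial_mul_factorial hkl]
  ring

section ReorderingTransform

variable {R : Type*} [CommSemiring R]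

def reorderingTransform (a : R) (X : ℕ → ℕ → R) (n m : ℕ) : R :=
  ∑ k ∈ range (min n m + 1), a ^ k * k ! * n.choose k * m.choose k * X (n - k) (m - k)

@[simp]
theorem reorderingTransform_zero (X : ℕ → ℕ → R) : reorderingTransform 0 X = X := by
  ext n m
  simp [reorderingTransform, Finset.sum_range_succ']

theorem reorderingTransform_reorderingTransform_summand {a b : R} (X : ℕ → ℕ → R) {n m k l : ℕ}
    (hkl : k ≤ l) :
    a ^ k * k ! * n.choose k * m.choose k *
        (b ^ (l - k) * (l - k)! * (n - k).choose (l - k) * (m - k).choose (l - k) *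
          X (n - k - (l - k)) (m - k - (l - k)))
      = a ^ k * b ^ (l - k) * l.choose k * (l ! * n.choose l * m.choose l * X (n - l) (m - l)) := by
  have hn : (k ! * (l - k)! * (n.choose k * (n - k).choose (l - k)) : R) = l ! * n.choose l := by
    simpa using congrArg (Nat.cast (R := R))
      (Nat.factorial_mul_factorial_mul_choose_mul_choose (n := n) hkl)
  have hm : (m.choose k * (m - k).choose (l - k) : R) = m.choose l * l.choose k := by
    simpa using congrArg (Nat.cast (R := R)) (Nat.choose_mul (n := m) hkl).symm
  have hX : ∀ p, p - k - (l - k) = p - l := fun p => by omega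
  calc _ = a ^ k * b ^ (l - k) * X (n - l) (m - l) *
          ((k ! * (l - k)! * (n.choose k * (n - k).choose (l - k)) : R) *
            (m.choose k * (m - k).choose (l - k))) := by rw [hX, hX]; ring
    _ = _ := by rw [hn, hm]; ring

theorem reorderingTransform_reorderingTransform (a b : R) (X : ℕ → ℕ → R) :
    reorderingTransform a (reorderingTransform b X) = reorderingTransform (a + b) X := by
  ext n m
  set N := min n m
  have hmin : ∀ k ∈ range (N + 1), min (n - k) (m - k) + 1 = N + 1 - k := fun k hk => by
    have := mem_range.mp hk; omega
  calc reorderingTransform a (reorderingTransform b X) n m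
      = ∑ k ∈ range (N + 1), ∑ j ∈ range (N + 1 - k), a ^ k * k ! * n.choose k * m.choose k *
          (b ^ j * j ! * (n - k).choose j * (m - k).choose j * X (n - k - j) (m - k - j)) := by
        refine sum_congr rfl fun k hk => ?_
        rw [reorderingTransform, mul_sum, hmin k hk]
    _ = ∑ l ∈ range (N + 1), ∑ k ∈ range (l + 1), a ^ k * b ^ (l - k) * l.choose k *
          (l ! * n.choose l * m.choose l * X (n - l) (m - l)) := by
        rw [← sum_range_diag_flip]
        refine sum_congr rfl fun l _ => sum_congr rfl fun k hk => ?_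
        exact reorderingTransform_reorderingTransform_summand X
          (Nat.lt_succ_iff.mp (mem_range.mp hk))
    _ = reorderingTransform (a + b) X n m := by
        refine sum_congr rfl fun l _ => ?_
        rw [← sum_mul, ← add_pow]
        ring

end ReorderingTransform

/-- the transformation `T(X)_{n,m} = Σ_k k!·C(n,k)·C(m,k)·X_{n−k,m−k}`
is inverted by `S(X)_{n,m} = Σ_k (−1)^k·k!·C(n,k)·C(m,k)·X_{n−k,m−k}`. -/
theorem inverse_reordering_transform (X : ℕ → ℕ → ℝ) (n m : ℕ) :
    ∑ k ∈ Finset.range (min n m + 1),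
      (-1 : ℝ) ^ k * k.factorial * n.choose k * m.choose k *
        ∑ j ∈ Finset.range (min (n - k) (m - k) + 1),
          (j.factorial : ℝ) * (n - k).choose j * (m - k).choose j *
            X (n - k - j) (m - k - j)
      = X n m := by
  have h := congrFun (congrFun (reorderingTransform_reorderingTransform (-1 : ℝ) 1 X) n) m
  rw [neg_add_cancel, reorderingTransform_zero] at h
  simpa only [reorderingTransform, one_pow, one_mul] using h
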